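/- arXiv:2503.19268 — 2 statements merged into one kernel-verified Lean document; each statement's English description precedes it below -/
import Mathlib

section
/- Claim II in the inverse-loss sensitivity proof: for any function f (not necessarily monotone), if x'' ⊆ x, then ℓ^f(x, y) ≤ ℓ^f(x'', y) + |x \ x''| for all y. -/
variable {U : Type*} [DecidableEq U]

noncomputable def invLoss (f : Finset U → ℝ) (x : Finset U) (y : ℝ) : ℕ∞ :=
  sInf {n : ℕ∞ | ∃ s ⊆ x, f s ≤ y ∧ ((x \ s).card : ℕ∞) = n}

/-! Any witness `s ⊆ x''` of `ℓ^f(x'', y)` is also a witness for `x`, and removing it from `x`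
costs `|x \ s| = |x'' \ s| + |x \ x''|`; taking the infimum over `s` gives the claim. -/

theorem Finset.card_sdiff_eq_card_sdiff_add_card_sdiff {α : Type*} [DecidableEq α]
    {s t u : Finset α} (hst : s ⊆ t) (htu : t ⊆ u) :
    (u \ s).card = (t \ s).card + (u \ t).card := by
  rw [← Finset.sdiff_union_sdiff_cancel htu hst, Finset.card_union_of_disjoint
    (Finset.sdiff_disjoint.mono_right Finset.sdiff_subset), add_comm]

theorem invLoss_le_card_sdiff {f : Finset U → ℝ} {x s : Finset U} {y : ℝ} (hs : s ⊆ x)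
    (hfs : f s ≤ y) : invLoss f x y ≤ (x \ s).card :=
  sInf_le ⟨s, hs, hfs, rfl⟩

/-- Claim II: for any `f`, if `x'' ⊆ x` then `ℓ^f(x, y) ≤ ℓ^f(x'', y) + |x \ x''|`. -/
theorem invLoss_superset (f : Finset U → ℝ)
    (x'' x : Finset U) (hsub : x'' ⊆ x) (y : ℝ) :
    invLoss f x y ≤ invLoss f x'' y + (((x \ x'').card : ℕ) : ℕ∞) := by
  conv_rhs => rw [invLoss, ENat.sInf_add]
  refine le_iInf₂ fun _ ⟨s, hs, hfs, hn⟩ => hn ▸ ?_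
  calc invLoss f x y ≤ (x \ s).card := invLoss_le_card_sdiff (hs.trans hsub) hfs
    _ = (x'' \ s).card + (x \ x'').card := by
      rw [Finset.card_sdiff_eq_card_sdiff_add_card_sdiff hs hsub, Nat.cast_add]
end

section
/- Bounded diameter of stable subsets: let v ⊂ u be neighbors with |v| ≥ ℓ and suppose m_ℓ(v) − τ > (|v| + ℓ)/2. Then for any two sets p, q each lying in StabSet_{ℓ, m_ℓ(u)−τ}(u) ∪ StabSet_{ℓ, m_ℓ(v)−τ}(v), we have |cmon f(p) − cmon f(q)| ≤ |u| − ℓ, where cmon f(x) = (f(x)+|x|)/2. -/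
/-!
Both `p` and `q` lie in `u` and have at least `m_ℓ(v) − τ` elements, so the gap hypothesis forces
`|p ∩ q| ≥ |p| + |q| − |u| ≥ ℓ`. Stability makes `f` 1-Lipschitz along the chains from `p ∩ q` up
to `p` and up to `q`, so `cmon f` increases by at most one per added element along each of them.
Comparing `p` and `q` through `p ∩ q` costs at most `|p ∪ q| − |p ∩ q| ≤ |u| − ℓ`.
-/

variable {U : Type*} [DecidableEq U]

def Adj (u v : Finset U) : Prop :=
  (v ⊆ u ∧ u.card = v.card + 1) ∨ (u ⊆ v ∧ v.card = u.card + 1)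

def LipOn (f : Finset U → ℝ) (c : ℝ) (D : Set (Finset U)) : Prop :=
  ∀ u ∈ D, ∀ v ∈ D, Adj u v → |f u - f v| ≤ c

def Stable (f : Finset U → ℝ) (l : ℤ) (x : Finset U) : Prop :=
  l ≤ (x.card : ℤ) ∧ LipOn f 1 {x' | x' ⊆ x ∧ l ≤ (x'.card : ℤ)}

noncomputable def maxStab (f : Finset U → ℝ) (l : ℕ) (x : Finset U) : ℕ :=
  sSup {n : ℕ | ∃ w ⊆ x, Stable f (l : ℤ) w ∧ w.card = n}

/-- Membership in `StabSet_{l, m_l(x) − τ}(x)`. -/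
def InStabSet (f : Finset U → ℝ) (l τ : ℕ) (x p : Finset U) : Prop :=
  p ⊆ x ∧ (maxStab f l x : ℤ) - τ ≤ (p.card : ℤ) ∧ Stable f (l : ℤ) p

noncomputable def cmon (f : Finset U → ℝ) (x : Finset U) : ℝ := (f x + x.card) / 2

theorem Stable.abs_sub_le_card_sub {f : Finset U → ℝ} {l : ℤ} {x : Finset U}
    (hx : Stable f l x) {s t : Finset U} (htx : t ⊆ x) (hst : s ⊆ t) (hs : l ≤ s.card) :
    |f t - f s| ≤ (t.card : ℝ) - s.card := by
  induction t using Finset.strongInduction with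
  | _ t ih =>
    obtain rfl | hne := eq_or_ne s t
    · simp
    obtain ⟨a, hat, has⟩ := Finset.exists_of_ssubset (hst.ssubset_of_ne hne)
    have hsub : t.erase a ⊂ t := Finset.erase_ssubset hat
    have hcard : (t.erase a).card + 1 = t.card := Finset.card_erase_add_one hat
    have hst' : s ⊆ t.erase a := Finset.subset_erase.mpr ⟨hst, has⟩
    have hl : l ≤ (t.erase a).card := hs.trans (mod_cast Finset.card_le_card hst')
    have hstep : |f t - f (t.erase a)| ≤ 1 :=
      hx.2 t ⟨htx, by omega⟩ _ ⟨hsub.subset.trans htx, hl⟩ (Or.inl ⟨hsub.subset, hcard.symm⟩)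
    have hrest := ih _ hsub (hsub.subset.trans htx) hst'
    have hcard' : ((t.erase a).card : ℝ) + 1 = t.card := mod_cast hcard
    linarith [abs_sub_le (f t) (f (t.erase a)) (f s)]

theorem Stable.cmon_sub_mem_Icc {f : Finset U → ℝ} {l : ℤ} {t : Finset U}
    (ht : Stable f l t) {s : Finset U} (hst : s ⊆ t) (hs : l ≤ s.card) :
    cmon f t - cmon f s ∈ Set.Icc 0 ((t.card : ℝ) - s.card) := by
  have hf := abs_le.mp (ht.abs_sub_le_card_sub subset_rfl hst hs)
  unfold cmon
  constructor <;> linarith [hf.1, hf.2]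

theorem abs_cmon_sub_le_of_le_card_inter {f : Finset U → ℝ} {l : ℕ} {p q : Finset U}
    (hp : Stable f l p) (hq : Stable f l q) (hl : l ≤ (p ∩ q).card) :
    |cmon f p - cmon f q| ≤ ((p ∪ q).card : ℝ) - l := by
  have hlℤ : (l : ℤ) ≤ (p ∩ q).card := mod_cast hl
  obtain ⟨hp₀, hp₁⟩ := hp.cmon_sub_mem_Icc Finset.inter_subset_left hlℤ
  obtain ⟨hq₀, hq₁⟩ := hq.cmon_sub_mem_Icc Finset.inter_subset_right hlℤ
  have hunion : ((p ∪ q).card : ℝ) + (p ∩ q).card = p.card + q.card :=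
    mod_cast Finset.card_union_add_card_inter p q
  have hlℝ : (l : ℝ) ≤ (p ∩ q).card := mod_cast hl
  rw [abs_sub_le_iff]
  constructor <;> linarith

theorem maxStab_mono {α : Type*} (f : Finset α → ℝ) (l : ℕ) {u v : Finset α} (hvu : v ⊆ u) :
    maxStab f l v ≤ maxStab f l u := by
  refine csSup_le_csSup' ⟨u.card, ?_⟩ ?_
  · rintro _ ⟨w, hw, -, rfl⟩
    exact Finset.card_le_card hw
  · rintro _ ⟨w, hw, hsw, rfl⟩
    exact ⟨w, hw.trans hvu, hsw, rfl⟩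

theorem subset_stable_card_of_inStabSet_or {α : Type*} {f : Finset α → ℝ} {l τ : ℕ}
    {u v r : Finset α} (hvu : v ⊆ u) (hr : InStabSet f l τ u r ∨ InStabSet f l τ v r) :
    r ⊆ u ∧ Stable f l r ∧ (maxStab f l v : ℤ) - τ ≤ r.card := by
  rcases hr with ⟨hru, hrc, hrs⟩ | ⟨hrv, hrc, hrs⟩
  · have hmono : (maxStab f l v : ℤ) ≤ maxStab f l u := mod_cast maxStab_mono f l hvu
    exact ⟨hru, hrs, by omega⟩
  · exact ⟨hrv.trans hvu, hrs, hrc⟩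

theorem Finset.le_card_inter_of_subset {p q u : Finset U} {l : ℕ} (hpu : p ⊆ u) (hqu : q ⊆ u)
    (h : u.card + l ≤ p.card + q.card) : l ≤ (p ∩ q).card := by
  have := Finset.card_union_add_card_inter p q
  have := Finset.card_le_card (Finset.union_subset hpu hqu)
  omega

theorem stabSet_bounded_diameter_general (f : Finset U → ℝ) (l τ : ℕ) (u v : Finset U)
    (hvu : v ⊆ u) (hcard : u.card = v.card + 1)
    (hgap : (v.card : ℤ) + l < 2 * ((maxStab f l v : ℤ) - τ))
    (p q : Finset U)
    (hp : InStabSet f l τ u p ∨ InStabSet f l τ v p)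
    (hq : InStabSet f l τ u q ∨ InStabSet f l τ v q) :
    |(f p + p.card) / 2 - (f q + q.card) / 2| ≤ (u.card : ℝ) - l := by
  obtain ⟨hpu, hps, hpc⟩ := subset_stable_card_of_inStabSet_or hvu hp
  obtain ⟨hqu, hqs, hqc⟩ := subset_stable_card_of_inStabSet_or hvu hq
  have hinter : l ≤ (p ∩ q).card := Finset.le_card_inter_of_subset hpu hqu (by omega)
  have hunion : ((p ∪ q).card : ℝ) ≤ u.card :=
    mod_cast Finset.card_le_card (Finset.union_subset hpu hqu)
  calc |cmon f p - cmon f q| ≤ ((p ∪ q).card : ℝ) - l :=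
        abs_cmon_sub_le_of_le_card_inter hps hqs hinter
    _ ≤ u.card - l := by linarith

/-- Bounded diameter: if `v ⊂ u` are neighbors, `|v| ≥ l` and
`m_l(v) − τ > (|v| + l)/2`, then for any `p, q` in
`StabSet_{l, m_l(u)−τ}(u) ∪ StabSet_{l, m_l(v)−τ}(v)`,
`|cmon f p − cmon f q| ≤ |u| − l` where `cmon f x = (f x + |x|)/2`. -/
theorem stabSet_bounded_diameter (f : Finset U → ℝ) (l τ : ℕ) (u v : Finset U)
    (hvu : v ⊆ u) (hcard : u.card = v.card + 1) (hl : l ≤ v.card)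
    (hgap : (v.card : ℤ) + l < 2 * ((maxStab f l v : ℤ) - τ))
    (p q : Finset U)
    (hp : InStabSet f l τ u p ∨ InStabSet f l τ v p)
    (hq : InStabSet f l τ u q ∨ InStabSet f l τ v q) :
    |(f p + p.card) / 2 - (f q + q.card) / 2| ≤ (u.card : ℝ) - l :=
  stabSet_bounded_diameter_general f l τ u v hvu hcard hgap p q hp hq
end
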